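/- arXiv:1911.09078 — 2 statements merged into one kernel-verified Lean document; each statement's English description precedes it below -/
import Mathlib

section
/- Let w = arctanh(2/3). Then w is the unique positive real satisfying simultaneously w ≥ arccosh( cosh(x/2) / cosh(x/4) ) and w ≥ arcsinh( 1 / sinh(x/2) ) with equality achievable; more precisely, the function x ↦ max{ arccosh(cosh(x/2)/cosh(x/4)), arcsinh(1/sinh(x/2)) } over x > 0 attains its minimum value arctanh(2/3), at the point where the two expressions are equal. -/
open Real

/-- Optimization underlying the non-separating orthogeodesic bound: if `ℓ, w > 0`
satisfy `cosh(ℓ/4)·cosh(w) ≥ cosh(ℓ/2)` and `sinh(ℓ/2)·sinh(w) ≥ 1`, then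
`tanh w ≥ 2/3`, i.e. `w ≥ arctanh (2/3)`. -/
theorem orthogeodesic_nonseparating_bound (ℓ w : ℝ) (hℓ : 0 < ℓ) (hw : 0 < w)
    (h1 : cosh (ℓ / 2) ≤ cosh (ℓ / 4) * cosh w)
    (h2 : 1 ≤ sinh (ℓ / 2) * sinh w) :
    (2 : ℝ) / 3 ≤ tanh w := by
  have hhalf : ℓ / 2 = 2 * (ℓ / 4) := by ring
  rw [hhalf, Real.cosh_two_mul] at h1
  rw [hhalf, Real.sinh_two_mul] at h2
  set c := cosh (ℓ / 4) with hcdef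
  set s := sinh (ℓ / 4) with hsdef
  set C := cosh w with hCdef
  set S := sinh w with hSdef
  have hc : 1 ≤ c := Real.one_le_cosh _
  have hC : 1 ≤ C := Real.one_le_cosh _
  have hs : 0 < s := Real.sinh_pos_iff.mpr (by linarith)
  have hS : 0 < S := Real.sinh_pos_iff.mpr hw
  have hc2 : c ^ 2 = s ^ 2 + 1 := Real.cosh_sq _
  have hC2 : C ^ 2 = S ^ 2 + 1 := Real.cosh_sq _
  rw [Real.tanh_eq_sinh_div_cosh, ← hSdef, ← hCdef]
  rw [div_le_div_iff₀ (by norm_num) (by linarith)]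
  by_contra hcon
  push_neg at hcon
  -- hcon : 3 * S < 2 * C  (roughly)
  have hS2 : S ^ 2 < 4 / 5 := by nlinarith
  have hC2' : C ^ 2 < 9 / 5 := by nlinarith
  have hc2' : c ^ 2 < 5 / 4 := by nlinarith [sq_nonneg (2 * c ^ 2 - 1), mul_pos (mul_pos hs hs) hS]
  nlinarith [mul_pos hs hS, mul_pos (mul_pos hs hs) (mul_pos hS hS), sq_nonneg (s * S), mul_le_mul_of_nonneg_left hS2.le (sq_nonneg s)]
end

section
/- Suppose positive reals w, t, r, r' satisfy the right-angled pentagon relations sinh(w)·sinh(t) = cosh(r') and sinh(w)·sinh(r - t) ≥ cosh(r), with 0 < t < r. Then sinh²(w) ≥ 1 + 2·cosh(r') ≥ 3, and hence w ≥ arcsinh(√3). -/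
open Real

/-- Trigonometric core of the separating case of the orthogeodesic lemma: from the
right-angled pentagon relations `sinh w · sinh t = cosh r'` and
`sinh w · sinh (r - t) ≥ cosh r` (with `0 < t < r`), conclude
`sinh² w ≥ 1 + 2 cosh r' ≥ 3`, and hence `w ≥ arcsinh √3`. -/
theorem orthogeodesic_separating_bound (w t r r' : ℝ)
    (hw : 0 < w) (ht : 0 < t) (hr' : 0 < r') (htr : t < r)
    (h1 : sinh w * sinh t = cosh r')
    (h2 : cosh r ≤ sinh w * sinh (r - t)) :
    1 + 2 * cosh r' ≤ sinh w ^ 2 ∧ 3 ≤ 1 + 2 * cosh r' ∧ arsinh (Real.sqrt 3) ≤ w := by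
  have hr : (0:ℝ) < r := ht.trans htr
  have hcr : 1 ≤ cosh r := Real.one_le_cosh r
  have hcr' : 1 ≤ cosh r' := Real.one_le_cosh r'
  have hsr : 0 < sinh r := Real.sinh_pos_iff.mpr hr
  have hcothr : sinh r ≤ cosh r := (Real.sinh_lt_cosh r).le
  -- expand sinh(r - t)
  have hexp : sinh (r - t) = sinh r * cosh t - cosh r * sinh t := by
    rw [Real.sinh_sub]
  have key : cosh r * (1 + cosh r') ≤ sinh w * sinh r * cosh t := by
    have : cosh r ≤ sinh w * sinh r * cosh t - cosh r * cosh r' := by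
      calc cosh r ≤ sinh w * sinh (r - t) := h2
        _ = sinh w * sinh r * cosh t - cosh r * (sinh w * sinh t) := by
            rw [hexp]; ring
        _ = sinh w * sinh r * cosh t - cosh r * cosh r' := by rw [h1]
    linarith
  -- divide by sinh r, using cosh r ≥ sinh r
  have key2 : sinh r * (1 + cosh r') ≤ sinh w * sinh r * cosh t := by
    have h0 : 0 < 1 + cosh r' := by linarith
    nlinarith
  have key3 : 1 + cosh r' ≤ sinh w * cosh t := by
    have := mul_le_mul_of_nonneg_left key2 (le_of_lt (inv_pos.mpr hsr))
    rw [mul_comm (sinh w) (sinh r), mul_assoc] at this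
    rw [inv_mul_cancel_left₀ (ne_of_gt hsr), inv_mul_cancel_left₀ (ne_of_gt hsr)] at this
    exact this
  -- square
  have hct : 1 ≤ cosh t := Real.one_le_cosh t
  have hsq : (1 + cosh r')^2 ≤ (sinh w)^2 * (cosh t)^2 := by
    nlinarith [key3]
  have hcosh2 : (cosh t)^2 = (sinh t)^2 + 1 := by
    have := Real.cosh_sq t; linarith
  have hA : (sinh w)^2 * (sinh t)^2 = (cosh r')^2 := by
    have : (sinh w * sinh t)^2 = (cosh r')^2 := by rw [h1]
    nlinarith [this]
  have main : 1 + 2 * cosh r' ≤ sinh w ^ 2 := by nlinarith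
  have h3 : 3 ≤ 1 + 2 * cosh r' := by linarith
  refine ⟨main, h3, ?_⟩
  have hsw : 0 < sinh w := Real.sinh_pos_iff.mpr hw
  have hs3 : Real.sqrt 3 ≤ sinh w := by
    rw [show (3:ℝ) = Real.sqrt 3 ^ 2 by rw [Real.sq_sqrt]; norm_num] at h3
    nlinarith [Real.sqrt_nonneg 3, main]
  calc arsinh (Real.sqrt 3) ≤ arsinh (sinh w) := Real.arsinh_le_arsinh.mpr hs3
    _ = w := Real.arsinh_sinh w
end
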